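/- (Distinguishing security implies semantic security bound.) Let p_{m} for m in a finite message set 𝓜 be a family of probability mass functions on a finite set 𝒵 (wiretapper output distributions), let p_M be any pmf on 𝓜, let Π be any partition of 𝓜, f : 𝒵 → Π any decoder and g ∈ Π any guess. Then ∑_m ∑_z p_M(m) p_m(z) 1[m ∈ f(z)] - max_{g∈Π} P_M(M ∈ g) ≤ max_{m, m̃ ∈ 𝓜} ‖p_m - p_{m̃}‖, where ‖·‖ is variational distance. -/
import Mathlib


open Finset

/-- Distinguishing security implies the semantic security bound: the advantage of any
decoder `f` over blind guessing is at most the maximal variational distance between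
the wiretapper's output distributions of two messages. -/
theorem semantic_le_distinguishing
    {𝓜 𝒵 : Type*} [Fintype 𝓜] [Fintype 𝒵] [DecidableEq 𝓜] [Nonempty 𝓜]
    (p : 𝓜 → 𝒵 → ℝ)
    (hp0 : ∀ m z, 0 ≤ p m z) (hp1 : ∀ m, ∑ z, p m z = 1)
    (pM : 𝓜 → ℝ) (hpM0 : ∀ m, 0 ≤ pM m) (hpM1 : ∑ m, pM m = 1)
    (P : Finset (Finset 𝓜))
    (hcov : ∀ m : 𝓜, ∃ g ∈ P, m ∈ g)
    (hdisj : ∀ g₁ ∈ P, ∀ g₂ ∈ P, g₁ ≠ g₂ → Disjoint g₁ g₂)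
    (hne : ∀ g ∈ P, g.Nonempty)
    (f : 𝒵 → Finset 𝓜) (hf : ∀ z, f z ∈ P) :
    (∑ m, ∑ z, pM m * p m z * (if m ∈ f z then (1 : ℝ) else 0))
        - (⨆ g : {g : Finset 𝓜 // g ∈ P}, ∑ m ∈ g.1, pM m)
      ≤ ⨆ mm : 𝓜 × 𝓜, (1 / 2) * ∑ z, |p mm.1 z - p mm.2 z| := by
  classical
  obtain ⟨m0⟩ := ‹Nonempty 𝓜›
  have hneP : Nonempty {g : Finset 𝓜 // g ∈ P} := by
    obtain ⟨g, hg, _⟩ := hcov m0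
    exact ⟨⟨g, hg⟩⟩
  set D := ⨆ mm : 𝓜 × 𝓜, (1 / 2) * ∑ z, |p mm.1 z - p mm.2 z| with hDdef
  set S := ⨆ g : {g : Finset 𝓜 // g ∈ P}, ∑ m ∈ g.1, pM m with hSdef
  have hbddD : BddAbove (Set.range fun mm : 𝓜 × 𝓜 =>
      (1 / 2) * ∑ z, |p mm.1 z - p mm.2 z|) :=
    Set.Finite.bddAbove (Set.finite_range _)
  have hbddS : BddAbove (Set.range fun g : {g : Finset 𝓜 // g ∈ P} =>
      ∑ m ∈ g.1, pM m) :=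
    Set.Finite.bddAbove (Set.finite_range _)
  -- total variation bound for each m
  have tv : ∀ m : 𝓜,
      ∑ z, (p m z - p m0 z) * (if m ∈ f z then (1 : ℝ) else 0) ≤ D := by
    intro m
    have h1 : ∀ z, (p m z - p m0 z) * (if m ∈ f z then (1 : ℝ) else 0)
        ≤ max (p m z - p m0 z) 0 := by
      intro z
      split
      · simpa using le_max_left _ 0
      · simpa using le_max_right (p m z - p m0 z) 0
    have h2 : ∀ a : ℝ, max a 0 = (|a| + a) / 2 := by
      intro a
      rcases le_or_gt 0 a with h | h
      · rw [max_eq_left h, abs_of_nonneg h]; ring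
      · rw [max_eq_right h.le, abs_of_neg h]; ring
    have h3 : ∑ z, (p m z - p m0 z) = 0 := by
      rw [Finset.sum_sub_distrib, hp1, hp1]; ring
    calc ∑ z, (p m z - p m0 z) * (if m ∈ f z then (1 : ℝ) else 0)
        ≤ ∑ z, max (p m z - p m0 z) 0 := Finset.sum_le_sum fun z _ => h1 z
      _ = ∑ z, (|p m z - p m0 z| + (p m z - p m0 z)) / 2 := by
            simp only [h2]
      _ = (1 / 2) * ∑ z, |p m z - p m0 z| := by
            rw [← Finset.sum_div, Finset.sum_add_distrib, h3]
            ring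
      _ ≤ D := le_ciSup hbddD (m, m0)
  have hSz : ∀ z, ∑ m, pM m * (if m ∈ f z then (1 : ℝ) else 0) ≤ S := by
    intro z
    have : ∑ m, pM m * (if m ∈ f z then (1 : ℝ) else 0) = ∑ m ∈ f z, pM m := by
      simp only [mul_ite, mul_one, mul_zero, Finset.sum_ite_mem, Finset.univ_inter]
    rw [this]
    exact le_ciSup hbddS ⟨f z, hf z⟩
  have hD0 : 0 ≤ D := by
    have := le_ciSup hbddD (m0, m0)
    simp only [sub_self, abs_zero, Finset.sum_const_zero, mul_zero] at this
    exact this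
  -- main estimate
  have main : (∑ m, ∑ z, pM m * p m z * (if m ∈ f z then (1 : ℝ) else 0))
      ≤ D + S := by
    have step1 : ∀ m, ∑ z, p m z * (if m ∈ f z then (1 : ℝ) else 0)
        ≤ D + ∑ z, p m0 z * (if m ∈ f z then (1 : ℝ) else 0) := by
      intro m
      have := tv m
      have expand : ∑ z, (p m z - p m0 z) * (if m ∈ f z then (1 : ℝ) else 0)
          = ∑ z, p m z * (if m ∈ f z then (1 : ℝ) else 0)
            - ∑ z, p m0 z * (if m ∈ f z then (1 : ℝ) else 0) := by
        rw [← Finset.sum_sub_distrib]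
        congr 1; ext z; ring
      linarith [this, expand ▸ this]
    calc (∑ m, ∑ z, pM m * p m z * (if m ∈ f z then (1 : ℝ) else 0))
        = ∑ m, pM m * ∑ z, p m z * (if m ∈ f z then (1 : ℝ) else 0) := by
          congr 1; ext m; rw [Finset.mul_sum]; congr 1; ext z; ring
      _ ≤ ∑ m, pM m * (D + ∑ z, p m0 z * (if m ∈ f z then (1 : ℝ) else 0)) := by
          apply Finset.sum_le_sum
          intro m _
          exact mul_le_mul_of_nonneg_left (step1 m) (hpM0 m)
      _ = D + ∑ m, pM m * ∑ z, p m0 z * (if m ∈ f z then (1 : ℝ) else 0) := by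
          simp only [mul_add, Finset.sum_add_distrib, ← Finset.sum_mul, hpM1]
          ring
      _ = D + ∑ z, p m0 z * ∑ m, pM m * (if m ∈ f z then (1 : ℝ) else 0) := by
          congr 1
          simp only [Finset.mul_sum]
          rw [Finset.sum_comm]
          refine Finset.sum_congr rfl fun z _ => Finset.sum_congr rfl fun m _ => by ring
      _ ≤ D + ∑ z, p m0 z * S := by
          gcongr with z _
          · exact hp0 m0 z
          · exact hSz z
      _ = D + S := by rw [← Finset.sum_mul, hp1]; ring
  linarith
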